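/- arXiv:1801.06449 — 2 statements merged into one kernel-verified Lean document; each statement's English description precedes it below -/
import Mathlib

section
/- Let N, K ≥ 1 be integers, let g⁽¹⁾, …, g⁽ᴷ⁾ ∈ ℝᴺ, let σ⁽¹⁾, …, σ⁽ᴷ⁾ be positive reals, and set η⁽ᵏ⁾ = 1/(σ⁽¹⁾ + ⋯ + σ⁽ᵏ⁾). Let w⁽¹⁾ ∈ ℝᴺ and suppose that for each k = 1, …, K the vector w⁽ᵏ⁺¹⁾ is a global minimizer over ℝᴺ of the function w ↦ ⟨∑_{k'=1}^{k} g⁽ᵏ'⁾, w⟩ + (1/2) ∑_{k'=1}^{k} σ⁽ᵏ'⁾ ‖w − w⁽ᵏ'⁾‖². Then w⁽ᵏ⁺¹⁾ = w⁽ᵏ⁾ − η⁽ᵏ⁾ g⁽ᵏ⁾ for every k = 1, …, K; that is, the FTRL-Proximal iterates (without regularization) coincide with the online gradient descent iterates. -/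
/-!
Completing the square, `⟪G, v⟫ + ½ ∑ σᵢ ‖v - wᵢ‖²` equals `(S/2) ‖v - c‖²` plus a constant, where
`S = ∑ σᵢ > 0` and `S • c = ∑ σᵢ • wᵢ - G`; so its minimizer is `c`. For the `k`-th iterate this reads
`Sₖ • w⁽ᵏ⁺¹⁾ = ∑_{i ≤ k} (σᵢ • wᵢ - gᵢ)`, and subtracting the same identity for `k - 1`
(trivially true for `k - 1 = 0`) gives `Sₖ • w⁽ᵏ⁺¹⁾ = Sₖ • w⁽ᵏ⁾ - g⁽ᵏ⁾`.
-/

open Finset RealInnerProductSpace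

section QuadraticMinimizer

variable {E : Type*} [NormedAddCommGroup E] [InnerProductSpace ℝ E]

theorem inner_add_half_mul_norm_sq_eq {S : ℝ} (hS : S ≠ 0) (a v : E) :
    ⟪a, v⟫ + S / 2 * ‖v‖ ^ 2 = S / 2 * ‖v + S⁻¹ • a‖ ^ 2 - ‖a‖ ^ 2 / (2 * S) := by
  rw [norm_add_sq_real, inner_smul_right, norm_smul, mul_pow, Real.norm_eq_abs, sq_abs,
    real_inner_comm]
  field_simp
  ring

theorem smul_eq_neg_of_forall_inner_add_half_mul_norm_sq_le {S : ℝ} (hS : 0 < S) {a m : E}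
    (hm : ∀ v, ⟪a, m⟫ + S / 2 * ‖m‖ ^ 2 ≤ ⟪a, v⟫ + S / 2 * ‖v‖ ^ 2) :
    S • m = -a := by
  have hle := hm (-(S⁻¹ • a))
  simp only [inner_add_half_mul_norm_sq_eq hS.ne', neg_add_cancel, norm_zero] at hle
  have hzero : m + S⁻¹ • a = 0 := by
    have : ‖m + S⁻¹ • a‖ ^ 2 ≤ 0 := by nlinarith
    simpa using this
  rw [eq_neg_iff_add_eq_zero, ← smul_inv_smul₀ hS.ne' a, ← smul_add, hzero, smul_zero]

theorem inner_add_half_sum_mul_norm_sub_sq {ι : Type*} (s : Finset ι) (σ : ι → ℝ) (w : ι → E)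
    (G v : E) :
    ⟪G, v⟫ + 1 / 2 * ∑ i ∈ s, σ i * ‖v - w i‖ ^ 2
      = ⟪G - ∑ i ∈ s, σ i • w i, v⟫ + (∑ i ∈ s, σ i) / 2 * ‖v‖ ^ 2
        + 1 / 2 * ∑ i ∈ s, σ i * ‖w i‖ ^ 2 := by
  simp only [norm_sub_sq_real, mul_add, mul_sub, sum_add_distrib, sum_sub_distrib, inner_sub_left,
    sum_inner, real_inner_smul_left, ← sum_mul, real_inner_comm _ v, mul_left_comm _ (2 : ℝ),
    ← mul_sum]
  ring

theorem smul_eq_of_forall_inner_add_half_sum_mul_norm_sub_sq_le {ι : Type*} {s : Finset ι}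
    {σ : ι → ℝ} (hσ : 0 < ∑ i ∈ s, σ i) {w : ι → E} {G m : E}
    (hm : ∀ v, ⟪G, m⟫ + 1 / 2 * ∑ i ∈ s, σ i * ‖m - w i‖ ^ 2
      ≤ ⟪G, v⟫ + 1 / 2 * ∑ i ∈ s, σ i * ‖v - w i‖ ^ 2) :
    (∑ i ∈ s, σ i) • m = ∑ i ∈ s, σ i • w i - G := by
  rw [← neg_sub G]
  refine smul_eq_neg_of_forall_inner_add_half_mul_norm_sq_le hσ fun v => ?_
  simpa only [inner_add_half_sum_mul_norm_sub_sq, add_le_add_iff_right] using hm v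

end QuadraticMinimizer

theorem smul_succ_eq_smul_sub_of_cumulative {E : Type*} [AddCommGroup E] [Module ℝ E] {K : ℕ}
    {σ : ℕ → ℝ} {g w : ℕ → E}
    (h : ∀ k ≤ K, (∑ i ∈ Icc 1 k, σ i) • w (k + 1) = ∑ i ∈ Icc 1 k, (σ i • w i - g i))
    {k : ℕ} (hk : k ∈ Icc 1 K) :
    (∑ i ∈ Icc 1 k, σ i) • w (k + 1) = (∑ i ∈ Icc 1 k, σ i) • w k - g k := by
  obtain ⟨hk1, hkK⟩ := mem_Icc.mp hk
  obtain ⟨j, rfl⟩ := Nat.exists_eq_add_of_le' hk1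
  rw [h (j + 1) hkK, sum_Icc_succ_top (by omega), sum_Icc_succ_top (by omega), ← h j (by omega),
    add_smul]
  abel

theorem ftrl_proximal_eq_ogd_general (N K : ℕ)
    (g : ℕ → EuclideanSpace ℝ (Fin N)) (σ : ℕ → ℝ)
    (hσ : ∀ k ∈ Finset.Icc 1 K, 0 < σ k)
    (η : ℕ → ℝ)
    (hη : ∀ k ∈ Finset.Icc 1 K, η k = 1 / ∑ k' ∈ Finset.Icc 1 k, σ k')
    (w : ℕ → EuclideanSpace ℝ (Fin N))
    (hmin : ∀ k ∈ Finset.Icc 1 K, ∀ v : EuclideanSpace ℝ (Fin N),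
      (inner ℝ (∑ k' ∈ Finset.Icc 1 k, g k') (w (k + 1)) : ℝ)
          + (1 / 2) * ∑ k' ∈ Finset.Icc 1 k, σ k' * ‖w (k + 1) - w k'‖ ^ 2
        ≤ (inner ℝ (∑ k' ∈ Finset.Icc 1 k, g k') v : ℝ)
          + (1 / 2) * ∑ k' ∈ Finset.Icc 1 k, σ k' * ‖v - w k'‖ ^ 2) :
    ∀ k ∈ Finset.Icc 1 K, w (k + 1) = w k - η k • g k := by
  have hS : ∀ k ∈ Icc 1 K, 0 < ∑ i ∈ Icc 1 k, σ i := fun k hk =>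
    sum_pos (fun i hi => hσ i (Icc_subset_Icc_right (mem_Icc.mp hk).2 hi))
      ⟨1, mem_Icc.mpr ⟨le_rfl, (mem_Icc.mp hk).1⟩⟩
  have hcum : ∀ k ≤ K, (∑ i ∈ Icc 1 k, σ i) • w (k + 1) = ∑ i ∈ Icc 1 k, (σ i • w i - g i) := by
    intro k hkK
    rcases Nat.eq_zero_or_pos k with rfl | hk1
    · simp
    · have hk : k ∈ Icc 1 K := mem_Icc.mpr ⟨hk1, hkK⟩
      rw [sum_sub_distrib]
      exact smul_eq_of_forall_inner_add_half_sum_mul_norm_sub_sq_le (hS k hk) (hmin k hk)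
  intro k hk
  have hSk := (hS k hk).ne'
  rw [hη k hk, one_div, ← (smul_right_injective _ hSk).eq_iff,
    smul_succ_eq_smul_sub_of_cumulative hcum hk, smul_sub, smul_inv_smul₀ hSk]

/-- The FTRL-Proximal iterates (without regularization) coincide with the
online gradient descent iterates. -/
theorem ftrl_proximal_eq_ogd (N K : ℕ) (hN : 1 ≤ N) (hK : 1 ≤ K)
    (g : ℕ → EuclideanSpace ℝ (Fin N)) (σ : ℕ → ℝ)
    (hσ : ∀ k ∈ Finset.Icc 1 K, 0 < σ k)
    (η : ℕ → ℝ)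
    (hη : ∀ k ∈ Finset.Icc 1 K, η k = 1 / ∑ k' ∈ Finset.Icc 1 k, σ k')
    (w : ℕ → EuclideanSpace ℝ (Fin N))
    (hmin : ∀ k ∈ Finset.Icc 1 K, ∀ v : EuclideanSpace ℝ (Fin N),
      (inner ℝ (∑ k' ∈ Finset.Icc 1 k, g k') (w (k + 1)) : ℝ)
          + (1 / 2) * ∑ k' ∈ Finset.Icc 1 k, σ k' * ‖w (k + 1) - w k'‖ ^ 2
        ≤ (inner ℝ (∑ k' ∈ Finset.Icc 1 k, g k') v : ℝ)
          + (1 / 2) * ∑ k' ∈ Finset.Icc 1 k, σ k' * ‖v - w k'‖ ^ 2) :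
    ∀ k ∈ Finset.Icc 1 K, w (k + 1) = w k - η k • g k :=
  ftrl_proximal_eq_ogd_general N K g σ hσ η hη w hmin
end

section
/- (Theorem 3.) Let F ≥ 1 and 1 ≤ k ≤ F be integers and let U ≥ 1 be an integer. Let P'_1 ≥ P'_2 ≥ ⋯ ≥ P'_F ≥ 0 be real numbers with ∑_{d=1}^{F} P'_d > 0, let ΔP ≥ 0, and let P̂'_1, …, P̂'_F be real numbers with |P̂'_d − P'_d| ≤ ΔP for every d. Let S ⊆ {1, …, F} with |S| = k satisfy P̂'_d ≥ P̂'_{d'} for all d ∈ S, d' ∉ S. Define the number of requests D_t = U · ∑_{d=1}^{F} P'_d, the optimal cache hit rate H* = (∑_{d=1}^{k} P'_d)/(∑_{d=1}^{F} P'_d), and the achieved cache hit rate H = (1/D_t) · ∑_{d∈S} ⌊U · P̂'_d − 1⌋, where ⌊·⌋ is the integer floor. Then H ≥ H* − k · (ΔP · U + 2)/D_t. -/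
/-- Theorem 3: the achievable cache hit rate of the proposed policy is lower
bounded by `H* − k (ΔP U + 2)/D_t`. -/
theorem cache_hit_rate_lower_bound (F k U : ℕ)
    (hF : 1 ≤ F) (hk : 1 ≤ k) (hkF : k ≤ F) (hU : 1 ≤ U)
    (P' Phat' : ℕ → ℝ) (ΔP : ℝ) (hΔP : 0 ≤ ΔP)
    (hdesc : ∀ d ∈ Finset.Icc 1 F, ∀ d' ∈ Finset.Icc 1 F, d ≤ d' → P' d' ≤ P' d)
    (hnonneg : ∀ d ∈ Finset.Icc 1 F, 0 ≤ P' d)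
    (hpos : 0 < ∑ d ∈ Finset.Icc 1 F, P' d)
    (herr : ∀ d ∈ Finset.Icc 1 F, |Phat' d - P' d| ≤ ΔP)
    (S : Finset ℕ) (hS : S ⊆ Finset.Icc 1 F) (hcard : S.card = k)
    (htop : ∀ d ∈ S, ∀ d' ∈ Finset.Icc 1 F, d' ∉ S → Phat' d' ≤ Phat' d)
    (Dt : ℝ) (hDt : Dt = (U : ℝ) * ∑ d ∈ Finset.Icc 1 F, P' d)
    (Hstar : ℝ)
    (hHstar : Hstar = (∑ d ∈ Finset.Icc 1 k, P' d) / (∑ d ∈ Finset.Icc 1 F, P' d))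
    (H : ℝ)
    (hH : H = (1 / Dt) * ∑ d ∈ S, (⌊(U : ℝ) * Phat' d - 1⌋ : ℝ)) :
    Hstar - (k : ℝ) * (ΔP * (U : ℝ) + 2) / Dt ≤ H := by
  set T : Finset ℕ := Finset.Icc 1 k with hT
  have hTsub : T ⊆ Finset.Icc 1 F := Finset.Icc_subset_Icc_right hkF
  have hTcard : T.card = k := by simp [hT]
  have hUpos : (0 : ℝ) < (U : ℝ) := by exact_mod_cast hU
  have hDtpos : 0 < Dt := by rw [hDt]; exact mul_pos hUpos hpos
  -- S has the largest Phat' values, so its Phat' sum dominates that of T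
  have hsum_hat : ∑ d ∈ T, Phat' d ≤ ∑ d ∈ S, Phat' d := by
    have hcards : (T \ S).card = (S \ T).card := by
      have h1 := Finset.card_sdiff_add_card_inter T S
      have h2 := Finset.card_sdiff_add_card_inter S T
      rw [Finset.inter_comm] at h2
      omega
    have hdiff : ∑ d ∈ T \ S, Phat' d ≤ ∑ d ∈ S \ T, Phat' d := by
      rcases Finset.eq_empty_or_nonempty (T \ S) with he | hne
      · have he2 : S \ T = ∅ := Finset.card_eq_zero.mp (by rw [← hcards, he]; simp)
        rw [he, he2]
      · obtain ⟨t0, ht0mem, ht0max⟩ := Finset.exists_max_image (T \ S) Phat' hne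
        have ht0T : t0 ∈ T := (Finset.mem_sdiff.mp ht0mem).1
        have ht0nS : t0 ∉ S := (Finset.mem_sdiff.mp ht0mem).2
        have ht0F : t0 ∈ Finset.Icc 1 F := hTsub ht0T
        calc ∑ d ∈ T \ S, Phat' d ≤ (T \ S).card • Phat' t0 :=
              Finset.sum_le_card_nsmul _ _ _ (fun x hx => ht0max x hx)
          _ = (S \ T).card • Phat' t0 := by rw [hcards]
          _ ≤ ∑ d ∈ S \ T, Phat' d := by
              apply Finset.card_nsmul_le_sum
              intro s hs
              exact htop s (Finset.mem_sdiff.mp hs).1 t0 ht0F ht0nS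
    calc ∑ d ∈ T, Phat' d
        = ∑ d ∈ T ∩ S, Phat' d + ∑ d ∈ T \ S, Phat' d :=
          (Finset.sum_inter_add_sum_sdiff T S Phat').symm
      _ ≤ ∑ d ∈ S ∩ T, Phat' d + ∑ d ∈ S \ T, Phat' d := by
          rw [Finset.inter_comm]; linarith [hdiff]
      _ = ∑ d ∈ S, Phat' d := Finset.sum_inter_add_sum_sdiff S T Phat'
  -- floor bound: each term is at least U * Phat' d - 2
  have hfloor : ∀ d ∈ S, (U : ℝ) * Phat' d - 2 ≤ (⌊(U : ℝ) * Phat' d - 1⌋ : ℝ) := by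
    intro d _
    have := Int.sub_one_lt_floor ((U : ℝ) * Phat' d - 1)
    linarith
  -- Phat' ≥ P' - ΔP on T
  have hhatP : ∀ d ∈ T, P' d - ΔP ≤ Phat' d := by
    intro d hd
    have := abs_le.mp (herr d (hTsub hd))
    linarith [this.1]
  have hsumT : ∑ d ∈ T, (P' d - ΔP) ≤ ∑ d ∈ T, Phat' d := Finset.sum_le_sum hhatP
  have hsumT' : ∑ d ∈ T, P' d - (k : ℝ) * ΔP ≤ ∑ d ∈ T, Phat' d := by
    rw [Finset.sum_sub_distrib, Finset.sum_const, hTcard, nsmul_eq_mul] at hsumT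
    linarith
  have hkey : Hstar * Dt - (k : ℝ) * (ΔP * (U : ℝ) + 2) ≤
      ∑ d ∈ S, (⌊(U : ℝ) * Phat' d - 1⌋ : ℝ) := by
    have h1 : ∑ d ∈ S, ((U : ℝ) * Phat' d - 2) ≤ ∑ d ∈ S, (⌊(U : ℝ) * Phat' d - 1⌋ : ℝ) :=
      Finset.sum_le_sum hfloor
    have h2 : ∑ d ∈ S, ((U : ℝ) * Phat' d - 2) =
        (U : ℝ) * ∑ d ∈ S, Phat' d - 2 * k := by
      rw [Finset.sum_sub_distrib, ← Finset.mul_sum, Finset.sum_const, hcard, nsmul_eq_mul]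
      ring
    have hHD : Hstar * Dt = (U : ℝ) * ∑ d ∈ T, P' d := by
      rw [hHstar, hDt, hT]
      field_simp
    have h3 : (U : ℝ) * (∑ d ∈ T, P' d - (k : ℝ) * ΔP) ≤ (U : ℝ) * ∑ d ∈ S, Phat' d :=
      mul_le_mul_of_nonneg_left (le_trans hsumT' hsum_hat) (le_of_lt hUpos)
    rw [hHD]
    nlinarith
  rw [hH]
  have h := (div_le_div_iff_of_pos_right hDtpos).mpr hkey
  have he : (Hstar * Dt - (k : ℝ) * (ΔP * (U : ℝ) + 2)) / Dt =
      Hstar - (k : ℝ) * (ΔP * (U : ℝ) + 2) / Dt := by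
    field_simp
  have he2 : (∑ d ∈ S, (⌊(U : ℝ) * Phat' d - 1⌋ : ℝ)) / Dt =
      (1 / Dt) * ∑ d ∈ S, (⌊(U : ℝ) * Phat' d - 1⌋ : ℝ) := by ring
  rw [he, he2] at h
  exact h
end
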